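/- The Robertson–Schrödinger uncertainty relation implies positive-definiteness of the covariance matrix: Let N be a positive natural number and let σ be a real symmetric 2N×2N matrix such that the complex matrix σ + i·Ω (which is Hermitian, since Ω is real antisymmetric) is positive semidefinite. Then σ is positive definite, i.e., uᵀσu > 0 for every nonzero u ∈ ℝ^{2N}. -/

import Mathlib

open Matrix Kronecker ComplexOrder

/-- The standard symplectic form `Ω = ⊕_{j=1}^N Ω₁` on `ℝ^{2N}`, with the
`2N` coordinates indexed by `Fin N × Fin 2` (mode index, quadrature index). -/
noncomputable def Omega (N : ℕ) : Matrix (Fin N × Fin 2) (Fin N × Fin 2) ℝ :=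
  (1 : Matrix (Fin N) (Fin N) ℝ) ⊗ₖ !![0, 1; -1, 0]

/-! On a real vector `u` the form of `σ + iΩ` is `uᵀσu + i uᵀΩu = uᵀσu`, as `Ω` is
antisymmetric, so `σ + iΩ ≥ 0` gives `uᵀσu ≥ 0`. If `uᵀσu = 0`, positive semidefiniteness
forces `(σ + iΩ)u = 0`, whose imaginary part is `Ωu = 0`; since `Ω² = -1`, this means
`u = 0`. -/

theorem dotProduct_mulVec_self_eq_zero_of_transpose_eq_neg {n R : Type*} [Fintype n]
    [CommRing R] [NoZeroDivisors R] [CharZero R] {A : Matrix n n R} (hA : Aᵀ = -A)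
    (u : n → R) : u ⬝ᵥ A *ᵥ u = 0 := by
  rw [← CharZero.eq_neg_self_iff]
  conv_lhs => rw [dotProduct_mulVec, ← mulVec_transpose, hA, neg_mulVec, neg_dotProduct,
    dotProduct_comm]

theorem star_ofReal_comp {n : Type*} (u : n → ℝ) :
    star (Complex.ofReal ∘ u) = Complex.ofReal ∘ u :=
  funext fun i => Complex.conj_ofReal (u i)

section Complexification

variable {n : Type*} [Fintype n]

theorem ofReal_comp_dotProduct (u w : n → ℝ) :
    (Complex.ofReal ∘ u) ⬝ᵥ (Complex.ofReal ∘ w) = ((u ⬝ᵥ w : ℝ) : ℂ) :=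
  (RingHom.map_dotProduct Complex.ofRealHom u w).symm

theorem map_ofReal_mulVec (A : Matrix n n ℝ) (u : n → ℝ) :
    A.map Complex.ofReal *ᵥ (Complex.ofReal ∘ u) = Complex.ofReal ∘ (A *ᵥ u) :=
  funext fun i => (RingHom.map_mulVec Complex.ofRealHom A u i).symm

theorem add_I_smul_map_ofReal_mulVec (S A : Matrix n n ℝ) (u : n → ℝ) :
    (S.map Complex.ofReal + Complex.I • A.map Complex.ofReal) *ᵥ (Complex.ofReal ∘ u) =
      fun i => ⟨(S *ᵥ u) i, (A *ᵥ u) i⟩ := by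
  funext i
  rw [add_mulVec, smul_mulVec, map_ofReal_mulVec, map_ofReal_mulVec]
  apply Complex.ext <;> simp

theorem star_dotProduct_add_I_smul_mulVec {S A : Matrix n n ℝ} (hA : Aᵀ = -A) (u : n → ℝ) :
    star (Complex.ofReal ∘ u) ⬝ᵥ
        (S.map Complex.ofReal + Complex.I • A.map Complex.ofReal) *ᵥ (Complex.ofReal ∘ u) =
      ((u ⬝ᵥ S *ᵥ u : ℝ) : ℂ) := by
  rw [star_ofReal_comp, add_mulVec, smul_mulVec, map_ofReal_mulVec, map_ofReal_mulVec,
    dotProduct_add, dotProduct_smul, ofReal_comp_dotProduct, ofReal_comp_dotProduct,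
    dotProduct_mulVec_self_eq_zero_of_transpose_eq_neg hA, Complex.ofReal_zero, smul_zero,
    add_zero]

variable {S A : Matrix n n ℝ} (hA : Aᵀ = -A)
  (hM : (S.map Complex.ofReal + Complex.I • A.map Complex.ofReal).PosSemidef)
include hA hM

theorem dotProduct_mulVec_nonneg_of_posSemidef_add_I_smul (u : n → ℝ) :
    0 ≤ u ⬝ᵥ S *ᵥ u := by
  have h := hM.dotProduct_mulVec_nonneg (Complex.ofReal ∘ u)
  rwa [star_dotProduct_add_I_smul_mulVec hA, Complex.zero_le_real] at h

theorem mulVec_eq_zero_of_posSemidef_add_I_smul {u : n → ℝ} (hu : u ⬝ᵥ S *ᵥ u = 0) :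
    A *ᵥ u = 0 := by
  have hv : (S.map Complex.ofReal + Complex.I • A.map Complex.ofReal) *ᵥ
      (Complex.ofReal ∘ u) = 0 := by
    rw [← hM.dotProduct_mulVec_zero_iff, star_dotProduct_add_I_smul_mulVec hA, hu,
      Complex.ofReal_zero]
  rw [add_I_smul_map_ofReal_mulVec] at hv
  exact funext fun i => congrArg Complex.im (congrFun hv i)

end Complexification

theorem Omega_transpose (N : ℕ) : (Omega N)ᵀ = -Omega N := by
  have h : !![(0 : ℝ), 1; -1, 0]ᵀ = (-1 : ℝ) • !![(0 : ℝ), 1; -1, 0] := by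
    ext i j; fin_cases i <;> fin_cases j <;> simp
  rw [Omega, ← kroneckerMap_transpose, transpose_one, h, kronecker_smul, neg_one_smul]

theorem Omega_mul_self (N : ℕ) : Omega N * Omega N = -1 := by
  have h : !![(0 : ℝ), 1; -1, 0] * !![(0 : ℝ), 1; -1, 0] = (-1 : ℝ) • 1 := by
    ext i j; fin_cases i <;> fin_cases j <;> simp
  rw [Omega, ← mul_kronecker_mul, one_mul, h, kronecker_smul, one_kronecker_one, neg_one_smul]

theorem Omega_mulVec_eq_zero_iff {N : ℕ} {u : Fin N × Fin 2 → ℝ} :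
    Omega N *ᵥ u = 0 ↔ u = 0 := by
  refine ⟨fun h => ?_, fun h => by rw [h, mulVec_zero]⟩
  rw [← neg_eq_zero, ← one_mulVec u, ← neg_mulVec, ← Omega_mul_self, ← mulVec_mulVec, h,
    mulVec_zero]

theorem robertson_schrodinger_posDef_general (N : ℕ)
    (σ : Matrix (Fin N × Fin 2) (Fin N × Fin 2) ℝ)
    (hRS : (σ.map (Complex.ofReal) +
        Complex.I • (Omega N).map (Complex.ofReal)).PosSemidef) :
    ∀ u : (Fin N × Fin 2) → ℝ, u ≠ 0 → 0 < u ⬝ᵥ σ.mulVec u := by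
  intro u hu
  have hΩ := Omega_transpose N
  refine (dotProduct_mulVec_nonneg_of_posSemidef_add_I_smul hΩ hRS u).lt_of_ne' fun hσu => hu ?_
  exact Omega_mulVec_eq_zero_iff.mp (mulVec_eq_zero_of_posSemidef_add_I_smul hΩ hRS hσu)

/-- **Robertson–Schrödinger implies positive-definiteness**: if `σ` is real
symmetric and the Hermitian matrix `σ + iΩ` is positive semidefinite, then
`σ` is positive definite: `uᵀσu > 0` for every nonzero real `u`. -/
theorem robertson_schrodinger_posDef (N : ℕ) (hN : 0 < N)
    (σ : Matrix (Fin N × Fin 2) (Fin N × Fin 2) ℝ) (hsymm : σᵀ = σ)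
    (hRS : (σ.map (Complex.ofReal) +
        Complex.I • (Omega N).map (Complex.ofReal)).PosSemidef) :
    ∀ u : (Fin N × Fin 2) → ℝ, u ≠ 0 → 0 < u ⬝ᵥ σ.mulVec u :=
  robertson_schrodinger_posDef_general N σ hRS
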